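/- arXiv:2507.11078 — 2 statements merged into one kernel-verified Lean document; each statement's English description precedes it below -/
import Mathlib

section
/- (Hong's bound) If G is a graph on n vertices with no isolated vertices and e(G) edges, then the spectral radius of its adjacency matrix satisfies ρ(G) ≤ √(2e(G) - n + 1). -/
/-- The graph `K_a ∨ (K_b ∪ (n-a-b)K₁)` on vertex set `Fin n`: vertices `0..a-1` form a
clique joined to everything, vertices `a..a+b-1` form a clique, and the remaining
vertices are isolated apart from their edges to the first `a` vertices. -/
def joinGraph (n a b : ℕ) : SimpleGraph (Fin n) where
  Adj u v := u ≠ v ∧ ((u : ℕ) < a ∨ (v : ℕ) < a ∨ ((u : ℕ) < a + b ∧ (v : ℕ) < a + b))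
  symm := by
    constructor
    intro u v h
    exact ⟨h.1.symm, by tauto⟩
  loopless := by constructor; intro u h; exact h.1 rfl

/-- The adjacency spectral radius: the supremum of the (real) eigenvalues of the
adjacency matrix of `G`. -/
noncomputable def specRad {V : Type*} [Fintype V] [DecidableEq V] (G : SimpleGraph V) : ℝ :=
  letI : DecidableRel G.Adj := Classical.decRel _
  sSup {μ : ℝ | Module.End.HasEigenvalue (Matrix.toLin' (G.adjMatrix ℝ)) μ}

/-!
Let `μ` be an eigenvalue of `A = A(G)`. Then `μ²` is an eigenvalue of the nonnegative matrix
`A²`, so by Gershgorin's theorem `μ²` is at most some row sum of `A²`. The row sum of `A²` at `u`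
is `∑_{w ~ u} d(w) = 2e - ∑_{w ≁ u} d(w)`, and since `u` itself has degree `d(u)` while the other
`n - 1 - d(u)` non-neighbours have degree at least one, this is at most `2e - n + 1`.
-/

open Finset Matrix

namespace Matrix

variable {n : Type*} [Fintype n] [DecidableEq n]

theorem exists_eigenvalue_le_sum_row_of_nonneg {B : Matrix n n ℝ} (hB : ∀ i j, 0 ≤ B i j)
    {μ : ℝ} (hμ : Module.End.HasEigenvalue (toLin' B) μ) : ∃ k, μ ≤ ∑ j, B k j := by
  obtain ⟨k, hk⟩ := eigenvalue_mem_ball hμ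
  refine ⟨k, ?_⟩
  rw [Metric.mem_closedBall, Real.dist_eq] at hk
  simp only [Real.norm_eq_abs, abs_of_nonneg (hB k _)] at hk
  rw [← add_sum_erase _ _ (mem_univ k)]
  linarith [le_abs_self (μ - B k k)]

end Matrix

namespace SimpleGraph

variable {V : Type*} [Fintype V] [DecidableEq V] (G : SimpleGraph V) [DecidableRel G.Adj]

theorem sum_adjMatrix_sq_row (u : V) :
    ∑ v, (G.adjMatrix ℝ ^ 2) u v = ∑ w ∈ G.neighborFinset u, (G.degree w : ℝ) := by
  simp_rw [sq, adjMatrix_mul_apply]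
  rw [sum_comm]
  refine sum_congr rfl fun w _ => ?_
  simp [adjMatrix_apply, ← card_neighborFinset_eq_degree, neighborFinset_def]

theorem card_le_sum_degree_compl_neighborFinset_add_one (hδ : ∀ v, ∃ w, G.Adj v w) (u : V) :
    Fintype.card V ≤ ∑ w ∈ (G.neighborFinset u)ᶜ, G.degree w + 1 := by
  have hu : u ∈ (G.neighborFinset u)ᶜ := by simp
  have hothers : #(((G.neighborFinset u)ᶜ).erase u)
      ≤ ∑ w ∈ ((G.neighborFinset u)ᶜ).erase u, G.degree w := by
    rw [card_eq_sum_ones]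
    exact sum_le_sum fun w _ => (G.degree_pos_iff_exists_adj w).mpr (hδ w)
  rw [← add_sum_erase _ _ hu]
  rw [card_erase_of_mem hu, card_compl, card_neighborFinset_eq_degree] at hothers
  have := G.degree_lt_card_verts u
  omega

theorem sum_degree_neighborFinset_add_card_le (hδ : ∀ v, ∃ w, G.Adj v w) (u : V) :
    ∑ w ∈ G.neighborFinset u, G.degree w + Fintype.card V ≤ 2 * #G.edgeFinset + 1 := by
  rw [← sum_degrees_eq_twice_card_edges, ← sum_add_sum_compl (G.neighborFinset u)]
  linarith [G.card_le_sum_degree_compl_neighborFinset_add_one hδ u]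

end SimpleGraph

open SimpleGraph in
theorem stmt_3 {V : Type*} [Fintype V] [DecidableEq V] (G : SimpleGraph V)
    (hδ : ∀ v : V, ∃ u, G.Adj v u) :
    specRad G ≤ Real.sqrt (2 * (G.edgeSet.ncard : ℝ) - (Fintype.card V : ℝ) + 1) := by
  let : DecidableRel G.Adj := Classical.decRel _
  refine Real.sSup_le (fun μ hμ => Real.le_sqrt_of_sq_le ?_) (Real.sqrt_nonneg _)
  have hsq : Module.End.HasEigenvalue (toLin' (G.adjMatrix ℝ ^ 2)) (μ ^ 2) := by
    rw [toLin'_pow]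
    exact hμ.pow 2
  have hA2 : ∀ i j, 0 ≤ (G.adjMatrix ℝ ^ 2) i j := fun i j => by
    rw [adjMatrix_pow_apply_eq_card_walk]
    positivity
  obtain ⟨u, hu⟩ := Matrix.exists_eigenvalue_le_sum_row_of_nonneg hA2 hsq
  have hcomb : ∑ w ∈ G.neighborFinset u, (G.degree w : ℝ) + Fintype.card V
      ≤ 2 * #G.edgeFinset + 1 := by
    exact_mod_cast G.sum_degree_neighborFinset_add_card_le hδ u
  rw [sum_adjMatrix_sq_row] at hu
  rw [← coe_edgeFinset, Set.ncard_coe_finset]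
  linarith
end

section
/- Let k ≥ 1 be an integer, and let G be a graph on at least 2k+2 vertices admitting a k-matching. If for every S ⊆ V(G) such that the induced subgraph G[S] contains a k-matching one has i(G-S) ≤ |S| - 2k (where i denotes the number of isolated vertices), then every k-matching M of G extends to a fractional perfect matching h of G with h(e) = 1 for all e ∈ M. Conversely, if G is fractional k-extendable then this condition holds. -/
/-- `M` is a matching of size `k` in `G`: `k` pairwise vertex-disjoint edges of `G`. -/
def IsKMatching {V : Type*} (G : SimpleGraph V) (M : Finset (Sym2 V)) (k : ℕ) : Prop :=
  M.card = k ∧ (↑M : Set (Sym2 V)) ⊆ G.edgeSet ∧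
    ∀ e ∈ M, ∀ f ∈ M, e ≠ f → ∀ v : V, ¬(v ∈ e ∧ v ∈ f)

/-- `h` is a fractional perfect matching of `G`: it assigns each edge a real number in
`[0,1]` (and `0` to non-edges), with the values on the edges at each vertex summing to `1`. -/
def IsFracPerfectMatching {V : Type*} [Fintype V] [DecidableEq V] (G : SimpleGraph V)
    [DecidableRel G.Adj] (h : Sym2 V → ℝ) : Prop :=
  (∀ e, 0 ≤ h e ∧ h e ≤ 1) ∧ (∀ e, e ∉ G.edgeSet → h e = 0) ∧
    ∀ v : V, ∑ e ∈ G.incidenceFinset v, h e = 1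

/-- The number of isolated vertices of `G - S`, the subgraph of `G` induced on the
complement of `S`. -/
noncomputable def isoCount {V : Type*} (G : SimpleGraph V) (S : Finset V) : ℕ :=
  {v : V | v ∉ S ∧ ∀ u, G.Adj v u → u ∈ S}.ncard

/-!
Given a `k`-matching `M`, Hall's theorem produces a permutation `σ` of `V` with `v ~ σ v` for
every `v`, which swaps the ends of every edge of `M` and maps each vertex not covered by `M` to
an uncovered neighbour. Putting weight `1/2` on each `s(v, σ v)`, counted with multiplicity,
gives the required fractional perfect matching. Hall's condition for the uncovered vertices
reduces to independent sets `B`, and for those it is the hypothesis at `S = N(B) ∪ V(M)`, where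
every vertex of `B` is isolated in `G - S`.

Conversely, let `h` extend a `k`-matching `M` with `V(M) ⊆ S`. The vertices of `V(M)` are
saturated by `M`, so every isolated vertex of `G - S` sends its unit of weight to `S \ V(M)`;
double counting gives `i(G - S) ≤ |S| - 2k`.
-/

open Finset

lemma Finset.card_le_card_biUnion_of_symm {α : Type*} [DecidableEq α] {r : α → Finset α}
    (hr : ∀ a b, b ∈ r a → a ∈ r b) {T : Finset α}
    (hindep : ∀ B ⊆ T, Disjoint B (B.biUnion r) → #B ≤ #(B.biUnion r))
    {B : Finset α} (hB : B ⊆ T) : #B ≤ #(B.biUnion r) := by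
  set N := B.biUnion r
  set B' := B.filter (· ∉ N)
  have hB'N : B'.biUnion r ⊆ N := biUnion_subset_biUnion_of_subset_left r (filter_subset _ B)
  have hB' : #B' ≤ #(B'.biUnion r) := by
    refine hindep B' ((filter_subset _ B).trans hB) ?_
    exact disjoint_left.mpr fun a ha haN => (mem_filter.mp ha).2 (hB'N haN)
  -- a vertex of `B` related to some `a ∈ B'` would put `a` into `N`
  have hdisj : Disjoint (B'.biUnion r) (B.filter (· ∈ N)) := by
    refine disjoint_left.mpr fun b hb hbB => ?_
    obtain ⟨a, ha, hba⟩ := mem_biUnion.mp hb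
    exact (mem_filter.mp ha).2 (mem_biUnion.mpr ⟨b, (mem_filter.mp hbB).1, hr a b hba⟩)
  calc #B = #(B.filter (· ∈ N)) + #B' := (card_filter_add_card_filter_not _).symm
    _ ≤ #(B'.biUnion r) + #(B.filter (· ∈ N)) := by omega
    _ = #(B'.biUnion r ∪ B.filter (· ∈ N)) := (card_union_of_disjoint hdisj).symm
    _ ≤ #N := card_le_card (union_subset hB'N fun a ha => (mem_filter.mp ha).2)

section FracMatching

variable {V : Type*} [Fintype V] [DecidableEq V] {G : SimpleGraph V} [DecidableRel G.Adj]

lemma SimpleGraph.sum_incidenceFinset_eq_sum_neighborFinset {M : Type*} [AddCommMonoid M]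
    (v : V) (f : Sym2 V → M) :
    ∑ e ∈ G.incidenceFinset v, f e = ∑ u ∈ G.neighborFinset v, f s(v, u) := by
  refine (sum_nbij (fun u => s(v, u)) ?_ ?_ ?_ fun _ _ => rfl).symm
  · intro u hu
    simpa using G.mem_incidence_iff_neighbor.mpr (by simpa using hu)
  · intro a _ b _ hab
    exact Sym2.congr_right.mp hab
  · intro e he
    have he' := (G.mem_incidenceFinset v e).mp he
    exact ⟨G.otherVertexOfIncident he', by simpa using G.incidence_other_prop he',
      Sym2.other_spec' he'.2⟩

namespace IsFracPerfectMatching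

variable {h : Sym2 V → ℝ}

lemma sum_adj_eq_one (hh : IsFracPerfectMatching G h) (v : V) :
    ∑ u, (if G.Adj v u then h s(v, u) else 0) = 1 := by
  rw [← sum_filter, ← SimpleGraph.neighborFinset_eq_filter,
    ← G.sum_incidenceFinset_eq_sum_neighborFinset, hh.2.2 v]

lemma eq_zero_of_eq_one (hh : IsFracPerfectMatching G h) {v : V} {e e' : Sym2 V}
    (he : h e = 1) (hve : v ∈ e) (he' : e' ∈ G.incidenceFinset v) (hne : e' ≠ e) :
    h e' = 0 := by
  have heE : e ∈ G.edgeSet := by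
    by_contra hnot
    simp [hh.2.1 e hnot] at he
  have heInc : e ∈ G.incidenceFinset v := (G.mem_incidenceFinset v e).mpr ⟨heE, hve⟩
  have hrest : ∑ x ∈ (G.incidenceFinset v).erase e, h x = 0 := by
    have hsum := hh.2.2 v
    rw [← add_sum_erase _ h heInc, he] at hsum
    linarith
  exact (sum_eq_zero_iff_of_nonneg fun x _ => (hh.1 x).1).mp hrest e' (mem_erase.mpr ⟨hne, he'⟩)

/-- Double counting of the weight on the edges between `I` and `U`. -/
lemma card_le_card_of_forall_adj (hh : IsFracPerfectMatching G h) {I U : Finset V}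
    (hIU : ∀ v ∈ I, ∀ u, G.Adj v u → h s(v, u) ≠ 0 → u ∈ U) : #I ≤ #U := by
  set w : V → V → ℝ := fun v u => if G.Adj v u then h s(v, u) else 0
  have hw_nonneg : ∀ v u, 0 ≤ w v u := fun v u => by
    simp only [w]; split_ifs <;> simp [(hh.1 _).1]
  have hw_symm : ∀ v u, w v u = w u v := fun v u => by
    simp only [w, G.adj_comm v u, Sym2.eq_swap]
  have hw_supp : ∀ v ∈ I, ∀ u ∉ U, w v u = 0 := fun v hv u hu => by
    simp only [w]; split_ifs with hadj
    · by_contra hne; exact hu (hIU v hv u hadj hne)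
    · rfl
  suffices (#I : ℝ) ≤ #U by exact_mod_cast this
  calc (#I : ℝ) = ∑ v ∈ I, ∑ u, w v u := by simp [w, hh.sum_adj_eq_one]
    _ = ∑ v ∈ I, ∑ u ∈ U, w v u := sum_congr rfl fun v hv =>
        (sum_subset (subset_univ U) fun u _ hu => hw_supp v hv u hu).symm
    _ = ∑ u ∈ U, ∑ v ∈ I, w u v := by rw [sum_comm]; simp only [hw_symm]
    _ ≤ ∑ u ∈ U, ∑ v, w u v := by
        gcongr with u _
        exacts [fun v _ _ => hw_nonneg u v, subset_univ I]
    _ = #U := by simp [w, hh.sum_adj_eq_one]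

end IsFracPerfectMatching

end FracMatching

section PermFracMatching

variable {V : Type*} [Fintype V] [DecidableEq V]

/-- Weight `1/2` on each edge `s(v, σ v)`, counted with multiplicity: a transposition `(a b)` of
`σ` puts weight `1` on `s(a, b)`. -/
noncomputable def permFracMatching (σ : Equiv.Perm V) (e : Sym2 V) : ℝ :=
  (#{v | s(v, σ v) = e} : ℝ) / 2

lemma permFracMatching_eq_one {σ : Equiv.Perm V} {a b : V} (hab : a ≠ b) (ha : σ a = b)
    (hb : σ b = a) : permFracMatching σ s(a, b) = 1 := by
  have hfiber : ({v | s(v, σ v) = s(a, b)} : Finset V) = {a, b} := by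
    ext v
    simp only [mem_filter, mem_univ, true_and, mem_insert, mem_singleton, Sym2.eq_iff]
    constructor
    · rintro (⟨rfl, _⟩ | ⟨rfl, _⟩) <;> simp
    · rintro (rfl | rfl) <;> simp [ha, hb]
  rw [permFracMatching, hfiber, card_pair hab]
  norm_num

variable {G : SimpleGraph V} [DecidableRel G.Adj] {σ : Equiv.Perm V}

lemma sum_incidenceFinset_permFracMatching (hσ : ∀ v, G.Adj v (σ v)) (v : V) :
    ∑ e ∈ G.incidenceFinset v, permFracMatching σ e = 1 := by
  have hinc : ∀ w, s(w, σ w) ∈ G.incidenceFinset v ↔ w = v ∨ w = σ.symm v := by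
    intro w
    simp [SimpleGraph.incidenceSet, hσ w, σ.eq_symm_apply, eq_comm]
  have hne : v ≠ σ.symm v := by
    intro h
    have hadj := hσ (σ.symm v)
    rw [σ.apply_symm_apply, ← h] at hadj
    exact G.irrefl hadj
  simp only [permFracMatching, ← sum_div, natCast_card_filter]
  rw [sum_comm]
  simp only [sum_ite_eq, hinc]
  rw [← natCast_card_filter,
    show ({w | w = v ∨ w = σ.symm v} : Finset V) = {v, σ.symm v} by ext; simp, card_pair hne]
  norm_num

lemma isFracPerfectMatching_permFracMatching (hσ : ∀ v, G.Adj v (σ v)) :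
    IsFracPerfectMatching G (permFracMatching σ) := by
  have hzero : ∀ e, e ∉ G.edgeSet → permFracMatching σ e = 0 := by
    intro e he
    rw [permFracMatching, filter_false_of_mem]
    · simp
    · rintro v - rfl
      exact he (hσ v)
  refine ⟨fun e => ⟨by unfold permFracMatching; positivity, ?_⟩, hzero,
    sum_incidenceFinset_permFracMatching hσ⟩
  by_cases he : e ∈ G.edgeSet
  · induction e with
    | _ a b =>
      have hmem : s(a, b) ∈ G.incidenceFinset a :=
        (G.mem_incidenceFinset a _).mpr ⟨he, Sym2.mem_mk_left a b⟩
      rw [← sum_incidenceFinset_permFracMatching hσ a]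
      exact single_le_sum (fun e _ => by unfold permFracMatching; positivity) hmem
  · simp [hzero e he]

end PermFracMatching

section Matching

variable {V : Type*} [DecidableEq V] {G : SimpleGraph V} {M : Finset (Sym2 V)} {k : ℕ}

def coveredVerts (M : Finset (Sym2 V)) : Finset V := M.biUnion Sym2.toFinset

lemma mem_coveredVerts {v : V} : v ∈ coveredVerts M ↔ ∃ e ∈ M, v ∈ e := by
  simp [coveredVerts, Sym2.mem_toFinset]

def partners [Fintype V] (M : Finset (Sym2 V)) (v : V) : Finset V := {u | s(v, u) ∈ M}

namespace IsKMatching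

lemma eq_of_mem_of_mem (hM : IsKMatching G M k) {e f : Sym2 V} (he : e ∈ M) (hf : f ∈ M)
    {v : V} (hve : v ∈ e) (hvf : v ∈ f) : e = f := by
  by_contra hne
  exact hM.2.2 e he f hf hne v ⟨hve, hvf⟩

lemma card_coveredVerts (hM : IsKMatching G M k) : #(coveredVerts M) = 2 * k := by
  rw [coveredVerts, card_biUnion]
  · rw [sum_congr rfl fun e he => Sym2.card_toFinset_of_not_isDiag e
        (G.not_isDiag_of_mem_edgeSet (hM.2.1 he)), sum_const, hM.1, smul_eq_mul, mul_comm]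
  · intro e he f hf hef
    exact disjoint_left.mpr fun v hve hvf =>
      hM.2.2 e he f hf hef v ⟨Sym2.mem_toFinset.mp hve, Sym2.mem_toFinset.mp hvf⟩

lemma card_filter_mem_coveredVerts_le_card_biUnion_partners [Fintype V]
    (hM : IsKMatching G M k) (B : Finset V) :
    #(B.filter (· ∈ coveredVerts M)) ≤ #(B.biUnion (partners M)) := by
  set BW := B.filter (· ∈ coveredVerts M)
  have hnonempty : ∀ v ∈ BW, (partners M v).Nonempty := by
    intro v hv
    obtain ⟨e, he, hve⟩ := mem_coveredVerts.mp (mem_filter.mp hv).2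
    exact ⟨Sym2.Mem.other' hve, by simpa [partners, Sym2.other_spec' hve] using he⟩
  have hdisj : (BW : Set V).PairwiseDisjoint (partners M) := by
    intro v _ v' _ hne
    refine disjoint_left.mpr fun u hu hu' => hne ?_
    simp only [partners, mem_filter, mem_univ, true_and] at hu hu'
    exact Sym2.congr_left.mp
      (hM.eq_of_mem_of_mem hu hu' (Sym2.mem_mk_right v u) (Sym2.mem_mk_right v' u))
  calc #BW = ∑ v ∈ BW, 1 := by simp
    _ ≤ ∑ v ∈ BW, #(partners M v) := sum_le_sum fun v hv => card_pos.mpr (hnonempty v hv)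
    _ = #(BW.biUnion (partners M)) := (card_biUnion hdisj).symm
    _ ≤ #(B.biUnion (partners M)) :=
        card_le_card (biUnion_subset_biUnion_of_subset_left _ (filter_subset _ B))

end IsKMatching

end Matching

section Extension

variable {V : Type*} [Fintype V] [DecidableEq V] {G : SimpleGraph V} [DecidableRel G.Adj]
  {M : Finset (Sym2 V)} {k : ℕ}

lemma isoCount_eq_card (S : Finset V) :
    isoCount G S = #{v | v ∉ S ∧ ∀ u, G.Adj v u → u ∈ S} := by
  rw [isoCount, ← Set.ncard_coe_finset, coe_filter]
  simp

def IsoCountBound (G : SimpleGraph V) (k : ℕ) : Prop :=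
  ∀ S : Finset V, (∃ M : Finset (Sym2 V), IsKMatching G M k ∧ ∀ e ∈ M, ∀ v ∈ e, v ∈ S) →
    (isoCount G S : ℤ) ≤ #S - 2 * k

def freeNeighbors (G : SimpleGraph V) [DecidableRel G.Adj] (M : Finset (Sym2 V)) (v : V) :
    Finset V :=
  {u | G.Adj v u ∧ v ∉ coveredVerts M ∧ u ∉ coveredVerts M}

lemma card_le_card_biUnion_freeNeighbors (hS : IsoCountBound G k) (hM : IsKMatching G M k)
    {B : Finset V} (hB : ∀ v ∈ B, v ∉ coveredVerts M) :
    #B ≤ #(B.biUnion (freeNeighbors G M)) := by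
  have hsymm : ∀ a b, b ∈ freeNeighbors G M a → a ∈ freeNeighbors G M b := by
    simp only [freeNeighbors, mem_filter, mem_univ, true_and]
    exact fun a b ⟨hab, ha, hb⟩ => ⟨hab.symm, hb, ha⟩
  refine card_le_card_biUnion_of_symm hsymm (T := (coveredVerts M)ᶜ) ?_
    fun v hv => mem_compl.mpr (hB v hv)
  intro B hBT hBN
  set N := B.biUnion (freeNeighbors G M)
  set S := N ∪ coveredVerts M
  have hiso : #B ≤ isoCount G S := by
    rw [isoCount_eq_card]
    refine card_le_card fun v hv => ?_
    have hvW : v ∉ coveredVerts M := mem_compl.mp (hBT hv)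
    simp only [mem_filter, mem_univ, true_and, S, mem_union, not_or]
    refine ⟨⟨disjoint_left.mp hBN hv, hvW⟩, fun u hu => ?_⟩
    by_cases huW : u ∈ coveredVerts M
    · exact Or.inr huW
    · exact Or.inl (mem_biUnion.mpr ⟨v, hv, by simp [freeNeighbors, hu, hvW, huW]⟩)
  have hSle := hS S ⟨M, hM, fun e he v hv => mem_union_right _ (mem_coveredVerts.mpr ⟨e, he, hv⟩)⟩
  have hScard : #S ≤ #N + 2 * k := hM.card_coveredVerts ▸ card_union_le N _
  omega

lemma exists_perm_adj_of_isoCountBound (hS : IsoCountBound G k) (hM : IsKMatching G M k) :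
    ∃ σ : Equiv.Perm V, (∀ v, G.Adj v (σ v)) ∧ ∀ a b, s(a, b) ∈ M → σ a = b := by
  have hhall : ∀ B : Finset V, #B ≤ #(B.biUnion fun v => partners M v ∪ freeNeighbors G M v) := by
    intro B
    have hdisj : Disjoint (B.biUnion (partners M)) (B.biUnion (freeNeighbors G M)) := by
      refine disjoint_left.mpr fun u hu hu' => ?_
      obtain ⟨v, -, huv⟩ := mem_biUnion.mp hu
      obtain ⟨_, -, huv'⟩ := mem_biUnion.mp hu'
      simp only [partners, freeNeighbors, mem_filter, mem_univ, true_and] at huv huv'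
      exact huv'.2.2 (mem_coveredVerts.mpr ⟨_, huv, Sym2.mem_mk_right v u⟩)
    have hfree : #(B.filter (· ∉ coveredVerts M)) ≤ #(B.biUnion (freeNeighbors G M)) :=
      (card_le_card_biUnion_freeNeighbors hS hM fun v hv => (mem_filter.mp hv).2).trans
        (card_le_card (biUnion_subset_biUnion_of_subset_left _ (filter_subset _ B)))
    calc #B = #(B.filter (· ∈ coveredVerts M)) + #(B.filter (· ∉ coveredVerts M)) :=
          (card_filter_add_card_filter_not _).symm
      _ ≤ #(B.biUnion (partners M)) + #(B.biUnion (freeNeighbors G M)) :=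
          add_le_add (hM.card_filter_mem_coveredVerts_le_card_biUnion_partners B) hfree
      _ = _ := by rw [biUnion_union, card_union_of_disjoint hdisj]
  obtain ⟨f, hf_inj, hf_mem⟩ := (all_card_le_biUnion_card_iff_exists_injective _).mp hhall
  have hf_partner : ∀ a b, s(a, b) ∈ M → f a = b := by
    intro a b hab
    rcases mem_union.mp (hf_mem a) with h | h <;>
      simp only [partners, freeNeighbors, mem_filter, mem_univ, true_and] at h
    · exact Sym2.congr_right.mp
        (hM.eq_of_mem_of_mem h hab (Sym2.mem_mk_left _ _) (Sym2.mem_mk_left _ _))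
    · exact absurd (mem_coveredVerts.mpr ⟨_, hab, Sym2.mem_mk_left a b⟩) h.2.1
  refine ⟨Equiv.ofBijective f (Finite.injective_iff_bijective.mp hf_inj), fun v => ?_,
    hf_partner⟩
  rcases mem_union.mp (hf_mem v) with h | h <;>
    simp only [partners, freeNeighbors, mem_filter, mem_univ, true_and] at h
  · exact hM.2.1 h
  · exact h.1

lemma exists_isFracPerfectMatching_of_isoCountBound (hS : IsoCountBound G k)
    (hM : IsKMatching G M k) :
    ∃ h : Sym2 V → ℝ, IsFracPerfectMatching G h ∧ ∀ e ∈ M, h e = 1 := by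
  obtain ⟨σ, hσ_adj, hσ_partner⟩ := exists_perm_adj_of_isoCountBound hS hM
  refine ⟨permFracMatching σ, isFracPerfectMatching_permFracMatching hσ_adj, fun e he => ?_⟩
  induction e with
  | _ a b =>
    exact permFracMatching_eq_one (G.mem_edgeSet.mp (hM.2.1 he)).ne (hσ_partner a b he)
      (hσ_partner b a (Sym2.eq_swap ▸ he))

lemma isoCount_le_of_isFracPerfectMatching {h : Sym2 V → ℝ} (hh : IsFracPerfectMatching G h)
    (hM : IsKMatching G M k) (hM1 : ∀ e ∈ M, h e = 1) {S : Finset V}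
    (hMS : ∀ e ∈ M, ∀ v ∈ e, v ∈ S) :
    (isoCount G S : ℤ) ≤ #S - 2 * k := by
  have hWS : coveredVerts M ⊆ S := fun v hv => by
    obtain ⟨e, he, hve⟩ := mem_coveredVerts.mp hv
    exact hMS e he v hve
  have hle : isoCount G S ≤ #(S \ coveredVerts M) := by
    rw [isoCount_eq_card]
    refine hh.card_le_card_of_forall_adj fun v hv u hvu hne => ?_
    simp only [mem_filter, mem_univ, true_and] at hv
    refine mem_sdiff.mpr ⟨hv.2 u hvu, fun huW => hne ?_⟩
    obtain ⟨e, he, hue⟩ := mem_coveredVerts.mp huW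
    refine hh.eq_zero_of_eq_one (hM1 e he) hue
      ((G.mem_incidenceFinset u _).mpr ⟨hvu, Sym2.mem_mk_right v u⟩) fun heq => ?_
    exact hv.1 (hMS e he v (heq ▸ Sym2.mem_mk_left v u))
  rw [card_sdiff_of_subset hWS, hM.card_coveredVerts] at hle
  have h2k : 2 * k ≤ #S := hM.card_coveredVerts ▸ card_le_card hWS
  omega

end Extension

theorem stmt_18_general {V : Type*} [Fintype V] [DecidableEq V] (G : SimpleGraph V)
    [DecidableRel G.Adj] (k : ℕ) :
    (∀ S : Finset V,
        (∃ M : Finset (Sym2 V), IsKMatching G M k ∧ ∀ e ∈ M, ∀ v ∈ e, v ∈ S) →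
          (isoCount G S : ℤ) ≤ (S.card : ℤ) - 2 * k) ↔
      (∀ M : Finset (Sym2 V), IsKMatching G M k →
        ∃ h : Sym2 V → ℝ, IsFracPerfectMatching G h ∧ ∀ e ∈ M, h e = 1) := by
  constructor
  · intro hS M hM
    exact exists_isFracPerfectMatching_of_isoCountBound hS hM
  · rintro hext S ⟨M, hM, hMS⟩
    obtain ⟨h, hh, hM1⟩ := hext M hM
    exact isoCount_le_of_isFracPerfectMatching hh hM hM1 hMS

theorem stmt_18 {V : Type*} [Fintype V] [DecidableEq V] (G : SimpleGraph V)
    [DecidableRel G.Adj] (k : ℕ) (hk : 1 ≤ k) (hcard : 2 * k + 2 ≤ Fintype.card V)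
    (hM : ∃ M : Finset (Sym2 V), IsKMatching G M k) :
    (∀ S : Finset V,
        (∃ M : Finset (Sym2 V), IsKMatching G M k ∧ ∀ e ∈ M, ∀ v ∈ e, v ∈ S) →
          (isoCount G S : ℤ) ≤ (S.card : ℤ) - 2 * k) ↔
      (∀ M : Finset (Sym2 V), IsKMatching G M k →
        ∃ h : Sym2 V → ℝ, IsFracPerfectMatching G h ∧ ∀ e ∈ M, h e = 1) :=
  stmt_18_general G k
end
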